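/- arXiv:1812.03453 — 7 statements merged into one kernel-verified Lean document; each statement's English description precedes it below -/
import Mathlib

section
/- Let d ≥ 1 and let Σ_μ, Σ_R, Σ̄_J ∈ ℝ^{d×d} be symmetric positive definite and κ ∈ ℝ^{d×d} be positive definite. Define, for λ > 0 and symmetric positive semidefinite q ∈ ℝ^{d×d}, α^{J,λ}(q) = Σ_μ − κq − qκᵀ − q (Σ_R^{-1} + λ·Σ̄_J^{-1}) q. Then for every r > 0, setting a_α = tr(Σ_μ) + (d·tr(Σ̄_J)·r)^{-1} and b_α = 2·(d·tr(Σ̄_J)·√r)^{-1}, one has tr(α^{J,λ}(q)) ≤ a_α − √λ · b_α · tr(q) for every symmetric positive semidefinite q ∈ ℝ^{d×d} and every λ > 0. -/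
/-!
Expanding the trace, `tr(κq) = tr(qκᵀ) ≥ 0` and `tr(q Σ_R⁻¹ q) ≥ 0` may be dropped. Since every
eigenvalue of `Σ̄_J` is at most `tr Σ̄_J`, one has `Σ̄_J⁻¹ ≥ (tr Σ̄_J)⁻¹ • 1` in the Loewner order, so
`tr(q Σ̄_J⁻¹ q) ≥ tr(q²) / tr Σ̄_J ≥ (tr q)² / (d · tr Σ̄_J)` by Cauchy–Schwarz on the diagonal of `q`.
With `D = d · tr Σ̄_J`, the remaining scalar bound `-λ (tr q)² / D ≤ 1 / (D r) - 2 √λ tr q / (D √r)`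
is `(√λ tr q - 1/√r)² / D ≥ 0`.
-/

open Matrix
open scoped MatrixOrder

namespace Matrix

variable {n : Type*} [Fintype n]

lemma trace_nonneg_of_dotProduct_mulVec_nonneg {R : Type*} [CommSemiring R] [PartialOrder R]
    [IsOrderedAddMonoid R] [DecidableEq n] {M : Matrix n n R} (hM : ∀ x, 0 ≤ x ⬝ᵥ (M *ᵥ x)) :
    0 ≤ M.trace :=
  Finset.sum_nonneg fun i _ => by simpa using hM (Pi.single i 1)

lemma IsHermitian.trace_mul_mul_le_of_le {q A B : Matrix n n ℝ} (hq : q.IsHermitian) (hAB : A ≤ B) :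
    (q * A * q).trace ≤ (q * B * q).trace := by
  have := star_left_conjugate_le_conjugate hAB q
  rw [star_eq_conjTranspose, hq.eq] at this
  rw [← sub_nonneg, ← trace_sub]
  exact (nonneg_iff_posSemidef.mp (sub_nonneg.mpr this)).trace_nonneg

lemma sq_trace_le_card_mul_trace_mul_self {q : Matrix n n ℝ} (hq : q.IsHermitian) :
    q.trace ^ 2 ≤ Fintype.card n * (q * q).trace := by
  calc q.trace ^ 2 ≤ Fintype.card n * ∑ i, q i i ^ 2 := sq_sum_le_card_mul_sum_sq
    _ ≤ Fintype.card n * (q * q).trace := by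
      gcongr
      refine Finset.sum_le_sum fun i _ => ?_
      rw [diag_apply, mul_apply, sq]
      refine Finset.single_le_sum (f := fun j => q i j * q j i) (fun j _ => ?_) (Finset.mem_univ i)
      rw [← hq.apply i j]
      exact mul_self_nonneg _

variable [DecidableEq n]

lemma PosSemidef.trace_mul_nonneg_of_dotProduct_mulVec_nonneg {M q : Matrix n n ℝ}
    (hq : q.PosSemidef) (hM : ∀ x, 0 ≤ x ⬝ᵥ (M *ᵥ x)) : 0 ≤ (M * q).trace := by
  set s := CFC.sqrt q
  have hs : sᵀ = s := (CFC.sqrt_nonneg q).posSemidef.1.eq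
  have hq_eq : q = s * s := (CFC.sqrt_mul_sqrt_self q hq.nonneg).symm
  have hconj : s * M * s = sᵀ * M * s := by rw [hs]
  rw [hq_eq, ← Matrix.mul_assoc, trace_mul_cycle, hconj]
  refine trace_nonneg_of_dotProduct_mulVec_nonneg fun x => ?_
  rw [← mulVec_mulVec, ← mulVec_mulVec, dotProduct_mulVec, vecMul_transpose]
  exact hM _

lemma PosSemidef.le_trace_of_mem_spectrum {A : Matrix n n ℝ} (hA : A.PosSemidef) {x : ℝ}
    (hx : x ∈ spectrum ℝ A) : x ≤ A.trace := by
  obtain ⟨i, rfl⟩ := hA.1.spectrum_real_eq_range_eigenvalues ▸ hx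
  rw [hA.1.trace_eq_sum_eigenvalues]
  exact Finset.single_le_sum (fun j _ => hA.eigenvalues_nonneg j) (Finset.mem_univ i)

lemma PosDef.inv_trace_smul_one_le_inv {A : Matrix n n ℝ} (hA : A.PosDef) :
    A.trace⁻¹ • (1 : Matrix n n ℝ) ≤ A⁻¹ := by
  rw [← Algebra.algebraMap_eq_smul_one, algebraMap_le_iff_le_spectrum hA.inv.1.isSelfAdjoint]
  intro x hx
  have hx_pos : 0 < x := (isStrictlyPositive_iff_posDef.mpr hA.inv).spectrum_pos hx
  have hx_inv : x⁻¹ ∈ spectrum ℝ A := by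
    lift A to (Matrix n n ℝ)ˣ using hA.isUnit
    rw [← coe_units_inv] at hx
    exact spectrum.inv₀_mem hx
  exact inv_le_of_inv_le₀ hx_pos (hA.posSemidef.le_trace_of_mem_spectrum hx_inv)

lemma PosDef.inv_trace_mul_trace_mul_self_le {A q : Matrix n n ℝ} (hA : A.PosDef)
    (hq : q.IsHermitian) : A.trace⁻¹ * (q * q).trace ≤ (q * A⁻¹ * q).trace := by
  have := hq.trace_mul_mul_le_of_le hA.inv_trace_smul_one_le_inv
  rwa [Matrix.mul_smul, Matrix.smul_mul, Matrix.mul_one, trace_smul, smul_eq_mul] at this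

lemma PosDef.sq_trace_div_le_trace_mul_inv_mul [Nonempty n] {A q : Matrix n n ℝ} (hA : A.PosDef)
    (hq : q.IsHermitian) : q.trace ^ 2 / (Fintype.card n * A.trace) ≤ (q * A⁻¹ * q).trace := by
  have hcard : (0 : ℝ) < Fintype.card n := by exact_mod_cast Fintype.card_pos
  calc q.trace ^ 2 / (Fintype.card n * A.trace)
      ≤ Fintype.card n * (q * q).trace / (Fintype.card n * A.trace) := by
        gcongr
        · exact mul_nonneg hcard.le hA.posSemidef.trace_nonneg
        · exact sq_trace_le_card_mul_trace_mul_self hq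
    _ = A.trace⁻¹ * (q * q).trace := by field_simp
    _ ≤ (q * A⁻¹ * q).trace := hA.inv_trace_mul_trace_mul_self_le hq

end Matrix

lemma sqrt_mul_two_inv_mul_le {lam r D t : ℝ} (hlam : 0 ≤ lam) (hr : 0 ≤ r) (hD : 0 ≤ D) :
    √lam * (2 * (D * √r)⁻¹) * t ≤ (D * r)⁻¹ + lam * (t ^ 2 / D) := by
  have hsq : 0 ≤ (√lam * t - (√r)⁻¹) ^ 2 / D := by positivity
  have hlam' : √lam ^ 2 = lam := Real.sq_sqrt hlam
  have hr' : (√r)⁻¹ ^ 2 = r⁻¹ := by rw [inv_pow, Real.sq_sqrt hr]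
  linear_combination hsq + (t ^ 2 / D) * hlam' + D⁻¹ * hr'

theorem trace_alpha_J_bound_general
    (d : ℕ) (hd : 1 ≤ d)
    (Sμ SR SJ κ : Matrix (Fin d) (Fin d) ℝ)
    (hSR : SR.PosDef) (hSJ : SJ.PosDef)
    (hκ : ∀ x : Fin d → ℝ, x ≠ 0 → 0 < x ⬝ᵥ (κ *ᵥ x))
    (r : ℝ) (hr : 0 < r) :
    ∀ (q : Matrix (Fin d) (Fin d) ℝ), q.PosSemidef →
      ∀ lam : ℝ, 0 < lam →
        (Sμ - κ * q - q * κᵀ - q * (SR⁻¹ + lam • SJ⁻¹) * q).trace ≤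
          (Sμ.trace + ((d : ℝ) * SJ.trace * r)⁻¹) -
            Real.sqrt lam * (2 * ((d : ℝ) * SJ.trace * Real.sqrt r)⁻¹) * q.trace := by
  intro q hq lam hlam
  have : Nonempty (Fin d) := ⟨⟨0, hd⟩⟩
  have hqT : qᵀ = q := hq.1.eq
  have hκq : 0 ≤ (κ * q).trace := by
    refine hq.trace_mul_nonneg_of_dotProduct_mulVec_nonneg fun x => ?_
    rcases eq_or_ne x 0 with rfl | hx
    · simp
    · exact (hκ x hx).le
  have hqκ : (q * κᵀ).trace = (κ * q).trace := by
    rw [← trace_transpose, transpose_mul, transpose_transpose, hqT]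
  have hR : 0 ≤ (q * SR⁻¹ * q).trace := by
    simpa [hqT] using (hSR.inv.posSemidef.mul_mul_conjTranspose_same q).trace_nonneg
  have hJ : q.trace ^ 2 / (d * SJ.trace) ≤ (q * SJ⁻¹ * q).trace := by
    simpa using hSJ.sq_trace_div_le_trace_mul_inv_mul hq.1
  have hAMGM := sqrt_mul_two_inv_mul_le (t := q.trace) hlam.le hr.le
    (mul_nonneg d.cast_nonneg hSJ.posSemidef.trace_nonneg)
  have hJlam := mul_le_mul_of_nonneg_left hJ hlam.le
  simp only [trace_sub, Matrix.mul_add, Matrix.add_mul, Matrix.mul_smul, Matrix.smul_mul, trace_add,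
    trace_smul, smul_eq_mul]
  linarith

/-- estimate for the trace of the Riccati drift term `α^{J,λ}`
for continuous-time expert opinions. -/
theorem trace_alpha_J_bound
    (d : ℕ) (hd : 1 ≤ d)
    (Sμ SR SJ κ : Matrix (Fin d) (Fin d) ℝ)
    (hSμ : Sμ.PosDef) (hSR : SR.PosDef) (hSJ : SJ.PosDef)
    (hκ : ∀ x : Fin d → ℝ, x ≠ 0 → 0 < x ⬝ᵥ (κ *ᵥ x))
    (r : ℝ) (hr : 0 < r) :
    ∀ (q : Matrix (Fin d) (Fin d) ℝ), q.PosSemidef →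
      ∀ lam : ℝ, 0 < lam →
        (Sμ - κ * q - q * κᵀ - q * (SR⁻¹ + lam • SJ⁻¹) * q).trace ≤
          (Sμ.trace + ((d : ℝ) * SJ.trace * r)⁻¹) -
            Real.sqrt lam * (2 * ((d : ℝ) * SJ.trace * Real.sqrt r)⁻¹) * q.trace :=
  trace_alpha_J_bound_general d hd Sμ SR SJ κ hSR hSJ hκ r hr
end

section
/- Let d ≥ 1, T > 0, δ ∈ (0, T], λ > 0. Let Σ_μ, Σ_R, Σ̄_J ∈ ℝ^{d×d} be symmetric positive definite, κ ∈ ℝ^{d×d} be positive definite, and q₀ ∈ ℝ^{d×d} be symmetric positive semidefinite. Suppose Q : [0, T] → ℝ^{d×d} is differentiable with Q(0) = q₀, Q(t) symmetric positive semidefinite for every t ∈ [0, T], and Q'(t) = Σ_μ − κ Q(t) − Q(t) κᵀ − Q(t)(Σ_R^{-1} + λ·Σ̄_J^{-1}) Q(t) for all t ∈ [0, T]. Then tr(Q(t)) ≤ C_J/√λ for all t ∈ [δ, T], where C_J = √( d·tr(Σ̄_J)·( tr(Σ_μ) + tr(q₀)/(e·δ) ) ) and e = exp(1). -/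
open Matrix Real Set

/-!
Taking traces in the Riccati equation, the drift term `κQ + Qκᵀ` and the `Σ_R⁻¹` term only
decrease `f = tr Q`, while Cauchy–Schwarz for the inner product `⟪X, Y⟫ = tr (Y Σ̄_J⁻¹ Xᵀ)`,
applied to `X = Σ̄_J` and `Y = Q`, gives `(tr Q)² ≤ tr Σ̄_J · tr (Q Σ̄_J⁻¹ Q)`. Hence
`f' ≤ a - c f²` with `a = tr Σ_μ` and `c = λ / tr Σ̄_J`. Replacing `c f²` by its tangent line at
`m = √((a + f 0 / (e δ)) / c)` leaves a linear differential inequality, which Grönwall solves;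
since `e^{-x} ≤ 1 / (e x)`, the solution is at most `m` from time `δ` on.
-/

namespace Matrix

variable {n : Type*} [Fintype n]

open scoped MatrixOrder in
theorem trace_mul_add_trace_mul_transpose_nonneg {κ Q : Matrix n n ℝ}
    (hκ : ∀ x, 0 ≤ x ⬝ᵥ (κ *ᵥ x)) (hQ : Q.PosSemidef) :
    0 ≤ (κ * Q).trace + (Q * κᵀ).trace := by
  classical
  have hsymm : (κ + κᵀ).PosSemidef := by
    refine .of_dotProduct_mulVec_nonneg ?_ fun x => ?_
    · simp [IsHermitian, add_comm]
    · have : x ⬝ᵥ (κᵀ *ᵥ x) = x ⬝ᵥ (κ *ᵥ x) := by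
        rw [mulVec_transpose, dotProduct_comm, dotProduct_mulVec]
      simpa [add_mulVec, dotProduct_add, this] using add_nonneg (hκ x) (hκ x)
  obtain ⟨B, rfl⟩ := CStarAlgebra.nonneg_iff_eq_star_mul_self.mp hQ.nonneg
  rw [trace_mul_comm _ κᵀ, ← trace_add, ← add_mul, star_eq_conjTranspose, ← Matrix.mul_assoc,
    trace_mul_comm]
  simpa [Matrix.mul_assoc] using (hsymm.mul_mul_conjTranspose_same B).trace_nonneg

variable [DecidableEq n]

theorem PosDef.sq_trace_le_trace_mul_trace_mul_inv_mul {S Q : Matrix n n ℝ} (hS : S.PosDef)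
    (hQ : Q.IsHermitian) : Q.trace ^ 2 ≤ S.trace * (Q * S⁻¹ * Q).trace := by
  let := S⁻¹.toMatrixSeminormedAddCommGroup hS.inv.posSemidef
  let := S⁻¹.toMatrixInnerProductSpace hS.inv.posSemidef
  have h := real_inner_mul_inner_self_le S Q
  change (Q * S⁻¹ * Sᴴ).trace * (Q * S⁻¹ * Sᴴ).trace ≤
    (S * S⁻¹ * Sᴴ).trace * (Q * S⁻¹ * Qᴴ).trace at h
  have hdet : IsUnit S.det := (isUnit_iff_isUnit_det S).mp hS.isUnit
  rwa [hS.isHermitian.eq, hQ.eq, nonsing_inv_mul_cancel_right _ _ hdet,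
    nonsing_inv_mul_cancel_right _ _ hdet, ← sq] at h

theorem trace_riccati_rhs_le {Sμ SR SJ κ Q : Matrix n n ℝ} {lam : ℝ} (hlam : 0 ≤ lam)
    (hSR : SR.PosSemidef) (hSJ : SJ.PosDef) (hκ : ∀ x, 0 ≤ x ⬝ᵥ (κ *ᵥ x))
    (hQ : Q.PosSemidef) :
    (Sμ - κ * Q - Q * κᵀ - Q * (SR⁻¹ + lam • SJ⁻¹) * Q).trace ≤
      Sμ.trace - lam / SJ.trace * Q.trace ^ 2 := by
  have hdrift := trace_mul_add_trace_mul_transpose_nonneg hκ hQ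
  have conj_nonneg : ∀ {P : Matrix n n ℝ}, P.PosSemidef → 0 ≤ (Q * P * Q).trace := fun hP => by
    have := (hP.mul_mul_conjTranspose_same Q).trace_nonneg
    rwa [hQ.isHermitian.eq] at this
  have hR := conj_nonneg hSR.inv
  have hJ : lam / SJ.trace * Q.trace ^ 2 ≤ lam * (Q * SJ⁻¹ * Q).trace := by
    calc lam / SJ.trace * Q.trace ^ 2
        ≤ lam / SJ.trace * (SJ.trace * (Q * SJ⁻¹ * Q).trace) := by
          gcongr
          · exact div_nonneg hlam hSJ.posSemidef.trace_nonneg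
          · exact hSJ.sq_trace_le_trace_mul_trace_mul_inv_mul hQ.isHermitian
      _ ≤ lam * (Q * SJ⁻¹ * Q).trace := by
          rw [← mul_assoc, div_mul_eq_mul_div, mul_div_assoc]
          exact mul_le_mul_of_nonneg_right (mul_le_of_le_one_right hlam (div_self_le_one _))
            (conj_nonneg hSJ.inv.posSemidef)
  simp only [Matrix.mul_add, Matrix.add_mul, Matrix.mul_smul, Matrix.smul_mul, trace_sub,
    trace_add, trace_smul, smul_eq_mul]
  linarith

end Matrix

theorem le_of_hasDerivAt_le_sub_mul {f f' : ℝ → ℝ} {T α β : ℝ} (hβ : β ≠ 0)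
    (hf : ∀ t ∈ Icc 0 T, HasDerivAt f (f' t) t) (hf' : ∀ t ∈ Icc 0 T, f' t ≤ α - β * f t) :
    ∀ t ∈ Icc 0 T, f t ≤ α / β + (f 0 - α / β) * exp (-(β * t)) := by
  intro t ht
  have h := le_gronwallBound_of_liminf_deriv_right_le (f' := f') (δ := f 0) (K := -β) (ε := α)
    (fun s hs => (hf s hs).continuousAt.continuousWithinAt)
    (fun s hs _ hr => (hf s (Ico_subset_Icc_self hs)).hasDerivWithinAt.liminf_right_slope_le hr)
    le_rfl (fun s hs => by linarith [hf' s (Ico_subset_Icc_self hs)]) t ht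
  rw [gronwallBound_of_K_ne_0 (neg_ne_zero.mpr hβ), sub_zero] at h
  convert h using 1
  field_simp
  ring

theorem le_sqrt_of_hasDerivAt_le_sub_mul_sq {f f' : ℝ → ℝ} {T δ a c : ℝ} (hδ : 0 < δ)
    (ha : 0 < a) (hc : 0 < c) (hf0 : 0 ≤ f 0)
    (hf : ∀ t ∈ Icc 0 T, HasDerivAt f (f' t) t) (hf' : ∀ t ∈ Icc 0 T, f' t ≤ a - c * f t ^ 2) :
    ∀ t ∈ Icc δ T, f t ≤ √((a + f 0 / (exp 1 * δ)) / c) := by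
  intro t ht
  set K := a + f 0 / (exp 1 * δ) with hK
  set m := √(K / c)
  have hm : 0 < m := by positivity
  have hcm : c * m ^ 2 = K := by rw [sq_sqrt (by positivity)]; field_simp
  set β := 2 * c * m
  have hβ : 0 < β := by positivity
  -- the tangent line of `c x²` at `x = m` turns the inequality into a linear one
  have htangent : ∀ s ∈ Icc 0 T, f' s ≤ (a + K) - β * f s := fun s hs => by
    nlinarith [hf' s hs, mul_nonneg hc.le (sq_nonneg (f s - m))]
  have hexp : exp (-(β * t)) ≤ 1 / (exp 1 * (β * δ)) := by
    rw [exp_neg, inv_eq_one_div]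
    gcongr
    calc exp 1 * (β * δ) ≤ exp (β * δ) := exp_one_mul_le_exp
      _ ≤ exp (β * t) := by gcongr; exact ht.1
  calc f t ≤ (a + K) / β + (f 0 - (a + K) / β) * exp (-(β * t)) :=
        le_of_hasDerivAt_le_sub_mul hβ.ne' hf htangent t ⟨hδ.le.trans ht.1, ht.2⟩
    _ ≤ (a + K) / β + f 0 * exp (-(β * t)) := by
        rw [sub_mul]
        linarith [mul_nonneg (by positivity : 0 ≤ (a + K) / β) (exp_pos (-(β * t))).le]
    _ ≤ (a + K) / β + f 0 * (1 / (exp 1 * (β * δ))) := by gcongr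
    _ = (K + K) / β := by rw [hK]; field_simp; ring
    _ = m := by rw [← hcm]; field_simp; ring

theorem trace_Q_J_bound_general
    (d : ℕ) (hd : 1 ≤ d)
    (T δ lam : ℝ) (hδ0 : 0 < δ) (hlam : 0 < lam)
    (Sμ SR SJ κ q₀ : Matrix (Fin d) (Fin d) ℝ)
    (hSμ : Sμ.PosDef) (hSR : SR.PosDef) (hSJ : SJ.PosDef)
    (hκ : ∀ x : Fin d → ℝ, x ≠ 0 → 0 < x ⬝ᵥ (κ *ᵥ x))
    (hq₀ : q₀.PosSemidef)
    (Q : ℝ → Matrix (Fin d) (Fin d) ℝ)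
    (hQ0 : Q 0 = q₀)
    (hQpsd : ∀ t ∈ Icc (0 : ℝ) T, (Q t).PosSemidef)
    (hQdiff : ∀ t ∈ Icc (0 : ℝ) T, ∀ i j : Fin d,
      HasDerivAt (fun s => Q s i j)
        ((Sμ - κ * Q t - Q t * κᵀ - Q t * (SR⁻¹ + lam • SJ⁻¹) * Q t) i j) t) :
    ∀ t ∈ Icc δ T,
      (Q t).trace ≤
        Real.sqrt ((d : ℝ) * SJ.trace *
          (Sμ.trace + q₀.trace / (Real.exp 1 * δ))) / Real.sqrt lam := by
  have : Nonempty (Fin d) := ⟨⟨0, hd⟩⟩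
  have hJ : 0 < SJ.trace := hSJ.trace_pos
  have hκ' : ∀ x, 0 ≤ x ⬝ᵥ (κ *ᵥ x) := fun x =>
    (eq_or_ne x 0).elim (fun h => by simp [h]) fun h => (hκ x h).le
  intro t ht
  have hbound := le_sqrt_of_hasDerivAt_le_sub_mul_sq (f := fun s => (Q s).trace) hδ0
    hSμ.trace_pos (div_pos hlam hJ) (hQ0 ▸ hq₀.trace_nonneg)
    (fun s hs => by simpa [trace, diag] using HasDerivAt.fun_sum fun i _ => hQdiff s hs i i)
    (fun s hs => trace_riccati_rhs_le hlam.le hSR.posSemidef hSJ hκ' (hQpsd s hs)) t ht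
  rw [hQ0] at hbound
  have hX : 0 ≤ Sμ.trace + q₀.trace / (exp 1 * δ) := by
    have := hq₀.trace_nonneg; have := hSμ.trace_pos; positivity
  calc (Q t).trace ≤ √((Sμ.trace + q₀.trace / (exp 1 * δ)) / (lam / SJ.trace)) := hbound
    _ ≤ √(d * SJ.trace * (Sμ.trace + q₀.trace / (exp 1 * δ)) / lam) := by
        rw [div_div_eq_mul_div, mul_comm _ SJ.trace]
        gcongr
        exact le_mul_of_one_le_left hJ.le (by exact_mod_cast hd)
    _ = _ := sqrt_div (by positivity) lam

/-- bound on the trace of the solution of the matrix Riccati equation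
for the conditional covariance of the `J`-investor. -/
theorem trace_Q_J_bound
    (d : ℕ) (hd : 1 ≤ d)
    (T δ lam : ℝ) (hT : 0 < T) (hδ0 : 0 < δ) (hδT : δ ≤ T) (hlam : 0 < lam)
    (Sμ SR SJ κ q₀ : Matrix (Fin d) (Fin d) ℝ)
    (hSμ : Sμ.PosDef) (hSR : SR.PosDef) (hSJ : SJ.PosDef)
    (hκ : ∀ x : Fin d → ℝ, x ≠ 0 → 0 < x ⬝ᵥ (κ *ᵥ x))
    (hq₀ : q₀.PosSemidef)
    (Q : ℝ → Matrix (Fin d) (Fin d) ℝ)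
    (hQ0 : Q 0 = q₀)
    (hQpsd : ∀ t ∈ Icc (0 : ℝ) T, (Q t).PosSemidef)
    (hQdiff : ∀ t ∈ Icc (0 : ℝ) T, ∀ i j : Fin d,
      HasDerivAt (fun s => Q s i j)
        ((Sμ - κ * Q t - Q t * κᵀ - Q t * (SR⁻¹ + lam • SJ⁻¹) * Q t) i j) t) :
    ∀ t ∈ Icc δ T,
      (Q t).trace ≤
        Real.sqrt ((d : ℝ) * SJ.trace *
          (Sμ.trace + q₀.trace / (Real.exp 1 * δ))) / Real.sqrt lam :=
  trace_Q_J_bound_general d hd T δ lam hδ0 hlam Sμ SR SJ κ q₀ hSμ hSR hSJ hκ hq₀ Q hQ0 hQpsd hQdiff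
end

section
/- Let d ≥ 1, T > 0, δ ∈ (0, T], λ > 0. Let Σ_μ, Σ_R, Σ̄_J ∈ ℝ^{d×d} be symmetric positive definite, κ ∈ ℝ^{d×d} be positive definite, and q₀ ∈ ℝ^{d×d} be symmetric positive semidefinite. Suppose Q : [0, T] → ℝ^{d×d} is differentiable with Q(0) = q₀, Q(t) symmetric positive semidefinite for every t ∈ [0, T], and Q'(t) = Σ_μ − κ Q(t) − Q(t) κᵀ − Q(t)(Σ_R^{-1} + λ·Σ̄_J^{-1}) Q(t) for all t ∈ [0, T]. Assume moreover that C_F > 0 satisfies ‖Q(t)‖_F ≤ C_F for all t ∈ [0, T]. Then for every real p ≥ 1, ‖Q(t)‖_F^p ≤ C_J · C_F^{p−1} / √λ for all t ∈ [δ, T], where C_J = √( d·tr(Σ̄_J)·( tr(Σ_μ) + tr(q₀)/(e·δ) ) ) and e = exp(1). -/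
/-!
The trace `f = tr Q` satisfies the scalar Riccati inequality `f' ≤ tr Σ_μ - (λ / tr Σ̄_J) f²`:
the `κ`-terms and the `Σ_R`-term have nonnegative trace, and Cauchy–Schwarz for the form
`(X, Y) ↦ tr (Xᵀ Σ̄_J⁻¹ Y)`, applied to `Σ̄_J` and `Q`, gives `(tr Q)² ≤ tr Σ̄_J · tr (Q Σ̄_J⁻¹ Q)`.

For `f' ≤ a - c f²`, any `B > 0` with `c B² ≥ a + f(0)/(eδ)` bounds `f` on `[δ, T]`: once `f` has
dropped to `B` it cannot climb back above it, and while `f > B` we have `f' ≤ a - cB f`, so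
`f(t) ≤ a/(cB) + f(0) e^{-cBt}`, where `x e^{-x} ≤ 1/e` gives `B e^{-cBt} ≤ 1/(ect)`.

Finally `‖Q‖_F ≤ tr Q` for `Q ⪰ 0` (from `Q_ij² ≤ Q_ii Q_jj`) and `‖Q‖_F^p ≤ ‖Q‖_F · C_F^{p-1}`.
-/

open Matrix Real Set

namespace Matrix

variable {n : Type*}

lemma PosSemidef.sq_apply_le {Q : Matrix n n ℝ} (hQ : Q.PosSemidef) (i j : n) :
    Q i j ^ 2 ≤ Q i i * Q j j := by
  have hdet := (hQ.submatrix ![i, j]).det_nonneg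
  have hsymm : Q j i = Q i j := by simpa using hQ.isHermitian.apply i j
  rw [det_fin_two] at hdet
  simp only [submatrix_apply, cons_val_zero, cons_val_one, hsymm] at hdet
  linarith

variable [Fintype n]

lemma PosSemidef.sqrt_sum_sq_le_trace {Q : Matrix n n ℝ} (hQ : Q.PosSemidef) :
    √(∑ i, ∑ j, Q i j ^ 2) ≤ Q.trace := by
  refine Real.sqrt_le_iff.mpr ⟨hQ.trace_nonneg, ?_⟩
  rw [trace, sq, Finset.sum_mul_sum]
  exact Finset.sum_le_sum fun i _ => Finset.sum_le_sum fun j _ => hQ.sq_apply_le i j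

def traceForm (M : Matrix n n ℝ) : LinearMap.BilinForm ℝ (Matrix n n ℝ) :=
  LinearMap.mk₂ ℝ (fun X Y => (Xᵀ * M * Y).trace)
    (fun X X' Y => by simp [Matrix.add_mul, trace_add])
    (fun c X Y => by simp [trace_smul])
    (fun X Y Y' => by simp [Matrix.mul_add, trace_add])
    (fun c X Y => by simp [trace_smul])

@[simp]
lemma traceForm_apply (M X Y : Matrix n n ℝ) : traceForm M X Y = (Xᵀ * M * Y).trace := rfl

lemma traceForm_self_nonneg {M : Matrix n n ℝ} (hM : ∀ x, 0 ≤ x ⬝ᵥ M *ᵥ x)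
    (X : Matrix n n ℝ) : 0 ≤ traceForm M X X := by
  have hcol : ∀ j, (Xᵀ * M * X) j j = Xᵀ j ⬝ᵥ M *ᵥ Xᵀ j := by
    intro j
    simp only [mul_apply, mulVec, dotProduct, transpose_apply, Finset.mul_sum, Finset.sum_mul,
      mul_assoc]
    exact Finset.sum_comm
  rw [traceForm_apply, trace]
  exact Finset.sum_nonneg fun j _ => by simpa only [diag, hcol] using hM _

lemma PosDef.trace_sq_le_trace_mul_trace_mul_inv_mul [DecidableEq n] {S Q : Matrix n n ℝ}
    (hS : S.PosDef) (hQ : Q.IsSymm) : Q.trace ^ 2 ≤ S.trace * (Q * S⁻¹ * Q).trace := by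
  have hSsymm : Sᵀ = S := (isHermitian_iff_isSymm.mp hS.isHermitian).eq
  have hSinv : S * S⁻¹ = 1 := mul_nonsing_inv S (isUnit_iff_isUnit_det S |>.mp hS.isUnit)
  have hSinv' : S⁻¹ * S = 1 := nonsing_inv_mul S (isUnit_iff_isUnit_det S |>.mp hS.isUnit)
  have hnonneg : ∀ x, 0 ≤ x ⬝ᵥ S⁻¹ *ᵥ x := by
    simpa using hS.posSemidef.inv.dotProduct_mulVec_nonneg
  have hCS := (traceForm S⁻¹).apply_mul_apply_le_of_forall_zero_le
    (traceForm_self_nonneg hnonneg) S Q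
  simpa [hSsymm, hQ.eq, hSinv, hSinv', Matrix.mul_assoc, sq] using hCS

lemma trace_mul_nonneg {κ Q : Matrix n n ℝ} (hκ : ∀ x, 0 ≤ x ⬝ᵥ κ *ᵥ x) (hQ : Q.PosSemidef) :
    0 ≤ (κ * Q).trace := by
  classical
  open scoped MatrixOrder in
  obtain ⟨B, rfl⟩ := CStarAlgebra.nonneg_iff_eq_star_mul_self.mp hQ.nonneg
  have hB : star B = Bᵀ := by ext; simp
  rw [hB, ← Matrix.mul_assoc, trace_mul_comm]
  simpa [Matrix.mul_assoc] using traceForm_self_nonneg hκ Bᵀ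

lemma PosSemidef.trace_mul_mul_nonneg {M Q : Matrix n n ℝ} (hM : M.PosSemidef)
    (hQ : Q.IsHermitian) : 0 ≤ (Q * M * Q).trace := by
  have h := (hM.conjTranspose_mul_mul_same Q).trace_nonneg
  rwa [hQ.eq] at h

lemma trace_riccati_le [DecidableEq n] {Sμ SR SJ κ Q : Matrix n n ℝ} {lam : ℝ} (hlam : 0 ≤ lam)
    (hSR : SR.PosSemidef) (hSJ : SJ.PosDef) (hκ : ∀ x, 0 ≤ x ⬝ᵥ κ *ᵥ x) (hQ : Q.PosSemidef) :
    (Sμ - κ * Q - Q * κᵀ - Q * (SR⁻¹ + lam • SJ⁻¹) * Q).trace ≤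
      Sμ.trace - lam / SJ.trace * Q.trace ^ 2 := by
  have hQsymm : Q.IsSymm := isHermitian_iff_isSymm.mp hQ.isHermitian
  have hκQ : 0 ≤ (κ * Q).trace := trace_mul_nonneg hκ hQ
  have hQκ : (Q * κᵀ).trace = (κ * Q).trace := by
    rw [← trace_transpose, transpose_mul, transpose_transpose, hQsymm.eq]
  have hR : 0 ≤ (Q * SR⁻¹ * Q).trace := hSR.inv.trace_mul_mul_nonneg hQ.isHermitian
  have hJ : Q.trace ^ 2 / SJ.trace ≤ (Q * SJ⁻¹ * Q).trace :=
    div_le_of_le_mul₀ hSJ.posSemidef.trace_nonneg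
      (hSJ.posSemidef.inv.trace_mul_mul_nonneg hQ.isHermitian)
      ((hSJ.trace_sq_le_trace_mul_trace_mul_inv_mul hQsymm).trans_eq (mul_comm _ _))
  have hexpand : (Sμ - κ * Q - Q * κᵀ - Q * (SR⁻¹ + lam • SJ⁻¹) * Q).trace =
      Sμ.trace - (κ * Q).trace - (Q * κᵀ).trace - (Q * SR⁻¹ * Q).trace -
        lam * (Q * SJ⁻¹ * Q).trace := by
    simp only [Matrix.mul_add, Matrix.add_mul, Matrix.mul_smul, Matrix.smul_mul, trace_sub,
      trace_add, trace_smul, smul_eq_mul]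
    ring
  rw [hexpand, hQκ, div_mul_eq_mul_div, mul_div_assoc]
  nlinarith [mul_le_mul_of_nonneg_left hJ hlam]

lemma hasDerivAt_trace {Q : ℝ → Matrix n n ℝ} {Q' : Matrix n n ℝ} {t : ℝ}
    (hQ : ∀ i, HasDerivAt (fun s => Q s i i) (Q' i i) t) :
    HasDerivAt (fun s => (Q s).trace) Q'.trace t := by
  simpa [trace] using HasDerivAt.fun_sum fun i _ => hQ i

end Matrix

section Comparison

variable {f f' : ℝ → ℝ}

lemma image_le_of_hasDerivAt_neg_above {s t B : ℝ} (hst : s ≤ t)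
    (hf : ∀ x ∈ Icc s t, HasDerivAt f (f' x) x) (hneg : ∀ x ∈ Icc s t, B < f x → f' x < 0)
    (hs : f s ≤ B) : f t ≤ B := by
  refine le_of_forall_pos_le_add fun ε hε => ?_
  refine image_le_of_deriv_right_lt_deriv_boundary' (B := fun _ => B + ε) (B' := 0)
    (fun x hx => (hf x hx).continuousAt.continuousWithinAt)
    (fun x hx => (hf x (Ico_subset_Icc_self hx)).hasDerivWithinAt) (by linarith)
    continuousOn_const (fun x _ => hasDerivWithinAt_const x _ _)
    (fun x hx hfx => hneg x (Ico_subset_Icc_self hx) (by linarith)) ⟨hst, le_rfl⟩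

lemma mul_image_le_of_hasDerivAt_le_sub_mul {a k t : ℝ} (hk : 0 ≤ k) (ht : 0 ≤ t)
    (hf : ∀ x ∈ Icc 0 t, HasDerivAt f (f' x) x) (hle : ∀ x ∈ Icc 0 t, f' x ≤ a - k * f x) :
    k * f t ≤ a + (k * f 0 - a) * exp (-(k * t)) := by
  set y : ℝ → ℝ := fun x => (k * f x - a) * exp (k * x)
  have hy : ∀ x ∈ Icc 0 t, HasDerivAt y (k * (f' x - (a - k * f x)) * exp (k * x)) x := by
    intro x hx
    have hexp : HasDerivAt (fun x => exp (k * x)) (exp (k * x) * k) x := by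
      simpa using ((hasDerivAt_id x).const_mul k).exp
    exact ((((hf x hx).const_mul k).sub_const a).mul hexp).congr_deriv (by ring)
  have hanti : AntitoneOn y (Icc 0 t) := by
    refine antitoneOn_of_hasDerivWithinAt_nonpos (convex_Icc 0 t)
      (fun x hx => (hy x hx).continuousAt.continuousWithinAt)
      (fun x hx => (hy x (interior_subset hx)).hasDerivWithinAt) fun x hx => ?_
    have hx' := interior_subset hx
    exact mul_nonpos_of_nonpos_of_nonneg
      (mul_nonpos_of_nonneg_of_nonpos hk (sub_nonpos.mpr (hle x hx'))) (exp_pos _).le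
  have hyt : (k * f t - a) * exp (k * t) ≤ k * f 0 - a := by
    simpa [y] using hanti (left_mem_Icc.mpr ht) (right_mem_Icc.mpr ht) ht
  have hexp : exp (k * t) * exp (-(k * t)) = 1 := by rw [← exp_add, add_neg_cancel, exp_zero]
  have hmul := mul_le_mul_of_nonneg_right hyt (exp_pos (-(k * t))).le
  rw [mul_assoc, hexp, mul_one] at hmul
  linarith

lemma image_le_of_hasDerivAt_le_sub_mul_sq {T δ a c B t : ℝ} (hδ : 0 < δ) (ha : 0 ≤ a)
    (hc : 0 < c) (hB : 0 < B) (hf₀ : 0 ≤ f 0) (hcB : a + f 0 / (exp 1 * δ) ≤ c * B ^ 2)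
    (hf : ∀ x ∈ Icc 0 T, HasDerivAt f (f' x) x) (hle : ∀ x ∈ Icc 0 T, f' x ≤ a - c * f x ^ 2)
    (ht : t ∈ Icc δ T) : f t ≤ B := by
  obtain ⟨hδt, htT⟩ := ht
  have ht0 : 0 < t := hδ.trans_le hδt
  have hsub : Icc 0 t ⊆ Icc 0 T := Icc_subset_Icc_right htT
  have hf₀δ : 0 ≤ f 0 / (exp 1 * δ) := by positivity
  by_cases hdip : ∃ s ∈ Icc 0 t, f s ≤ B
  · obtain ⟨s, hs, hfs⟩ := hdip
    have hsT : ∀ x ∈ Icc s t, x ∈ Icc 0 T := fun x hx => hsub ⟨hs.1.trans hx.1, hx.2⟩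
    refine image_le_of_hasDerivAt_neg_above hs.2 (fun x hx => hf x (hsT x hx))
      (fun x hx hBx => ?_) hfs
    have hsq : c * B ^ 2 < c * f x ^ 2 := mul_lt_mul_of_pos_left
      (pow_lt_pow_left₀ hBx hB.le two_ne_zero) hc
    linarith [hle x (hsT x hx)]
  · push Not at hdip
    have hlin := mul_image_le_of_hasDerivAt_le_sub_mul (k := c * B) (a := a) (by positivity)
      ht0.le (fun x hx => hf x (hsub hx)) fun x hx => by
        have hBf : c * B * f x ≤ c * f x ^ 2 := by
          rw [sq, ← mul_assoc]
          exact mul_le_mul_of_nonneg_right (mul_le_mul_of_nonneg_left (hdip x hx).le hc.le)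
            (hB.trans (hdip x hx)).le
        linarith [hle x (hsub hx)]
    have hdecay : c * B * exp (-(c * B * t)) ≤ 1 / (exp 1 * t) := by
      rw [le_div_iff₀ (by positivity)]
      have h := mul_le_mul_of_nonneg_right (exp_one_mul_le_exp (x := c * B * t))
        (exp_pos (-(c * B * t))).le
      rw [← exp_add, add_neg_cancel, exp_zero] at h
      linarith
    suffices c * B * f t ≤ c * B * B from le_of_mul_le_mul_left this (by positivity)
    calc c * B * f t ≤ a + (c * B * f 0 - a) * exp (-(c * B * t)) := hlin
      _ ≤ a + f 0 * (c * B * exp (-(c * B * t))) := by nlinarith [exp_pos (-(c * B * t))]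
      _ ≤ a + f 0 * (1 / (exp 1 * t)) := by gcongr
      _ ≤ a + f 0 / (exp 1 * δ) := by rw [mul_one_div]; gcongr
      _ ≤ c * B * B := by linarith

end Comparison

lemma Real.rpow_le_mul_rpow_sub_one {x b C p : ℝ} (hx : 0 ≤ x) (hxb : x ≤ b) (hxC : x ≤ C)
    (hp : 1 ≤ p) : x ^ p ≤ b * C ^ (p - 1) := by
  calc x ^ p = x ^ (1 : ℝ) * x ^ (p - 1) := by
        rw [← rpow_add' hx (by linarith), add_sub_cancel]
    _ ≤ b * C ^ (p - 1) := by
        rw [rpow_one]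
        exact mul_le_mul hxb (rpow_le_rpow hx hxC (by linarith)) (rpow_nonneg hx _)
          (hx.trans hxb)

theorem frobenius_Q_J_bound_general
    (d : ℕ) (hd : 1 ≤ d)
    (T δ lam : ℝ) (hδ0 : 0 < δ) (hlam : 0 < lam)
    (Sμ SR SJ κ q₀ : Matrix (Fin d) (Fin d) ℝ)
    (hSμ : Sμ.PosDef) (hSR : SR.PosDef) (hSJ : SJ.PosDef)
    (hκ : ∀ x : Fin d → ℝ, x ≠ 0 → 0 < x ⬝ᵥ (κ *ᵥ x))
    (hq₀ : q₀.PosSemidef)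
    (Q : ℝ → Matrix (Fin d) (Fin d) ℝ)
    (hQ0 : Q 0 = q₀)
    (hQpsd : ∀ t ∈ Icc (0 : ℝ) T, (Q t).PosSemidef)
    (hQdiff : ∀ t ∈ Icc (0 : ℝ) T, ∀ i j : Fin d,
      HasDerivAt (fun s => Q s i j)
        ((Sμ - κ * Q t - Q t * κᵀ - Q t * (SR⁻¹ + lam • SJ⁻¹) * Q t) i j) t)
    (CF : ℝ)
    (hCF : ∀ t ∈ Icc (0 : ℝ) T, Real.sqrt (∑ i, ∑ j, (Q t i j) ^ 2) ≤ CF) :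
    ∀ p : ℝ, 1 ≤ p → ∀ t ∈ Icc δ T,
      (Real.sqrt (∑ i, ∑ j, (Q t i j) ^ 2)) ^ p ≤
        Real.sqrt ((d : ℝ) * SJ.trace *
          (Sμ.trace + q₀.trace / (Real.exp 1 * δ))) * CF ^ (p - 1) / Real.sqrt lam := by
  intro p hp t ht
  have : Nonempty (Fin d) := ⟨⟨0, hd⟩⟩
  have htT : t ∈ Icc 0 T := ⟨hδ0.le.trans ht.1, ht.2⟩
  have hκ' : ∀ x, 0 ≤ x ⬝ᵥ κ *ᵥ x := fun x =>
    (eq_or_ne x 0).elim (fun hx => by simp [hx]) fun hx => (hκ x hx).le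
  set X := Sμ.trace + q₀.trace / (exp 1 * δ)
  set B := √((d : ℝ) * SJ.trace * X) / √lam
  have hX : 0 < X :=
    add_pos_of_pos_of_nonneg hSμ.trace_pos (div_nonneg hq₀.trace_nonneg (by positivity))
  have hτ : 0 < SJ.trace := hSJ.trace_pos
  have hB : 0 < B := div_pos (sqrt_pos.mpr (mul_pos (mul_pos (by positivity) hτ) hX))
    (sqrt_pos.mpr hlam)
  have hcB : X ≤ lam / SJ.trace * B ^ 2 := calc
    X ≤ d * X := le_mul_of_one_le_left hX.le (by exact_mod_cast hd)
    _ = lam / SJ.trace * B ^ 2 := by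
      rw [div_pow, sq_sqrt (by positivity), sq_sqrt hlam.le]
      field_simp
  have htrace : (Q t).trace ≤ B :=
    image_le_of_hasDerivAt_le_sub_mul_sq (f := fun s => (Q s).trace) hδ0
      hSμ.posSemidef.trace_nonneg (div_pos hlam hτ) hB
      (by simpa [hQ0] using hq₀.trace_nonneg) (by simpa [hQ0] using hcB)
      (fun s hs => hasDerivAt_trace fun i => hQdiff s hs i i)
      (fun s hs => trace_riccati_le hlam.le hSR.posSemidef hSJ hκ' (hQpsd s hs)) ht
  rw [mul_div_right_comm]
  exact rpow_le_mul_rpow_sub_one (sqrt_nonneg _)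
    ((hQpsd t htT).sqrt_sum_sq_le_trace.trans htrace) (hCF t htT) hp

/-- bound on powers of the Frobenius norm of the conditional covariance
of the `J`-investor. -/
theorem frobenius_Q_J_bound
    (d : ℕ) (hd : 1 ≤ d)
    (T δ lam : ℝ) (hT : 0 < T) (hδ0 : 0 < δ) (hδT : δ ≤ T) (hlam : 0 < lam)
    (Sμ SR SJ κ q₀ : Matrix (Fin d) (Fin d) ℝ)
    (hSμ : Sμ.PosDef) (hSR : SR.PosDef) (hSJ : SJ.PosDef)
    (hκ : ∀ x : Fin d → ℝ, x ≠ 0 → 0 < x ⬝ᵥ (κ *ᵥ x))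
    (hq₀ : q₀.PosSemidef)
    (Q : ℝ → Matrix (Fin d) (Fin d) ℝ)
    (hQ0 : Q 0 = q₀)
    (hQpsd : ∀ t ∈ Icc (0 : ℝ) T, (Q t).PosSemidef)
    (hQdiff : ∀ t ∈ Icc (0 : ℝ) T, ∀ i j : Fin d,
      HasDerivAt (fun s => Q s i j)
        ((Sμ - κ * Q t - Q t * κᵀ - Q t * (SR⁻¹ + lam • SJ⁻¹) * Q t) i j) t)
    (CF : ℝ) (hCF0 : 0 < CF)
    (hCF : ∀ t ∈ Icc (0 : ℝ) T, Real.sqrt (∑ i, ∑ j, (Q t i j) ^ 2) ≤ CF) :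
    ∀ p : ℝ, 1 ≤ p → ∀ t ∈ Icc δ T,
      (Real.sqrt (∑ i, ∑ j, (Q t i j) ^ 2)) ^ p ≤
        Real.sqrt ((d : ℝ) * SJ.trace *
          (Sμ.trace + q₀.trace / (Real.exp 1 * δ))) * CF ^ (p - 1) / Real.sqrt lam :=
  frobenius_Q_J_bound_general d hd T δ lam hδ0 hlam Sμ SR SJ κ q₀ hSμ hSR hSJ hκ hq₀ Q hQ0 hQpsd
    hQdiff CF hCF
end

section
/- Let d ≥ 1, T > 0. Let Σ_μ, Σ_R, Σ_J ∈ ℝ^{d×d} be symmetric positive definite, κ ∈ ℝ^{d×d} be positive definite, and q₀ ∈ ℝ^{d×d} be symmetric positive semidefinite. Suppose P, Q : [0, T] → ℝ^{d×d} are differentiable with P(0) = Q(0) = q₀, with P(t) and Q(t) symmetric positive semidefinite for every t ∈ [0, T], and satisfying P'(t) = Σ_μ − κ P(t) − P(t) κᵀ − P(t) Σ_R^{-1} P(t) and Q'(t) = Σ_μ − κ Q(t) − Q(t) κᵀ − Q(t)(Σ_R^{-1} + Σ_J^{-1}) Q(t) for all t ∈ [0, T]. Then Q(t) ⪯ P(t)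 for all t ∈ [0, T], i.e., P(t) − Q(t) is positive semidefinite; in particular tr(Q(t)) ≤ tr(P(t)) for all t ∈ [0, T]. -/
/-!
With `D = P - Q`, the two Riccati equations give the linear equation
`D' = N - M D - D L`, where `N = Q Σ_J⁻¹ Q ⪰ 0`, `M = κ + Q Σ_R⁻¹`, `L = κᵀ + Σ_R⁻¹ P`,
and `D 0 = 0`. Such an equation preserves positive semidefiniteness. Indeed, let `c` bound the
quadratic forms of `M + L` on `[0, T]`; then `D t + ε e^{(c+1)t} I` stays positive definite. At a
first time `t₁` at which it became singular, with kernel vector `x`, the function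
`s ↦ xᵀ (D s + ε e^{(c+1)s} I) x` is nonnegative on `[0, t₁]` and vanishes at `t₁`, yet its
derivative there is at least `ε e^{(c+1)t₁} |x|² > 0`. Letting `ε → 0` gives `D ⪰ 0`, and the
trace inequality follows.
-/

open Matrix Real Set Filter Topology

theorem HasDerivAt.nonpos_of_eventually_nhdsLT_le {g : ℝ → ℝ} {v t : ℝ}
    (hg : HasDerivAt g v t) (h : ∀ᶠ s in 𝓝[<] t, g t ≤ g s) : v ≤ 0 := by
  refine le_of_tendsto ((hasDerivAt_iff_tendsto_slope.1 hg).mono_left (nhdsLT_le_nhdsNE t)) ?_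
  filter_upwards [h, self_mem_nhdsWithin] with s hgs hst
  rw [slope_def_field]
  exact div_nonpos_of_nonneg_of_nonpos (sub_nonneg.2 hgs) (sub_nonpos.2 (le_of_lt hst))

theorem continuousOn_of_differentiableAt_apply {m n : Type*} {s : Set ℝ}
    {F : ℝ → Matrix m n ℝ} (h : ∀ t ∈ s, ∀ i j, DifferentiableAt ℝ (fun s => F s i j) t) :
    ContinuousOn F s :=
  continuousOn_pi.2 fun i => continuousOn_pi.2 fun j t ht =>
    (h t ht i j).continuousAt.continuousWithinAt

section

variable {n : Type*} [Fintype n]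

theorem hasDerivAt_dotProduct_mulVec {m : Type*} [Fintype m] {F : ℝ → Matrix m n ℝ}
    {F' : Matrix m n ℝ} {t : ℝ} (h : ∀ i j, HasDerivAt (fun s => F s i j) (F' i j) t)
    (x : m → ℝ) (y : n → ℝ) : HasDerivAt (fun s => x ⬝ᵥ F s *ᵥ y) (x ⬝ᵥ F' *ᵥ y) t := by
  simp only [dotProduct, mulVec, Finset.mul_sum]
  exact HasDerivAt.fun_sum fun i _ => HasDerivAt.fun_sum fun j _ =>
    ((h i j).mul_const (y j)).const_mul (x i)

theorem Matrix.posDef_of_forall_mem_sphere {A : Matrix n n ℝ} (hA : A.IsHermitian)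
    (h : ∀ u ∈ Metric.sphere (0 : n → ℝ) 1, 0 < u ⬝ᵥ A *ᵥ u) : A.PosDef := by
  refine .of_dotProduct_mulVec_pos hA fun x hx => ?_
  have hu := h (‖x‖⁻¹ • x) (by simp [norm_smul, hx])
  rw [mulVec_smul, smul_dotProduct, dotProduct_smul, smul_smul, smul_eq_mul] at hu
  simpa using pos_of_mul_pos_right hu (by positivity)

theorem Matrix.PosSemidef.of_forall_posDef_add_smul_one [DecidableEq n] {A : Matrix n n ℝ}
    (hA : A.IsHermitian) (h : ∀ δ : ℝ, 0 < δ → (A + δ • 1).PosDef) : A.PosSemidef := by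
  refine .of_dotProduct_mulVec_nonneg hA fun x => ?_
  have hlim : Tendsto (fun δ : ℝ => x ⬝ᵥ A *ᵥ x + δ * (x ⬝ᵥ x)) (𝓝[>] 0)
      (𝓝 (x ⬝ᵥ A *ᵥ x)) := by
    refine Tendsto.mono_left ?_ nhdsWithin_le_nhds
    simpa using ((tendsto_id (x := 𝓝 (0 : ℝ))).mul_const (x ⬝ᵥ x)).const_add (x ⬝ᵥ A *ᵥ x)
  refine ge_of_tendsto hlim (eventually_nhdsWithin_of_forall fun δ hδ => ?_)
  simpa [add_mulVec, smul_mulVec] using (h δ hδ).posSemidef.dotProduct_mulVec_nonneg x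

theorem abs_dotProduct_mulVec_le (A : Matrix n n ℝ) (x : n → ℝ) :
    |x ⬝ᵥ A *ᵥ x| ≤ (∑ i, ∑ j, |A i j|) * (x ⬝ᵥ x) := by
  have hsq (i : n) : x i * x i ≤ x ⬝ᵥ x :=
    (Finset.single_le_sum (f := fun k => x k * x k) (fun k _ => mul_self_nonneg (x k))
      (Finset.mem_univ i) : x i * x i ≤ ∑ k, x k * x k)
  have hx : ∀ i j, |x i * x j| ≤ x ⬝ᵥ x := fun i j =>
    abs_le.2 ⟨by nlinarith [hsq i, hsq j, sq_nonneg (x i + x j)],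
      by nlinarith [hsq i, hsq j, sq_nonneg (x i - x j)]⟩
  calc |x ⬝ᵥ A *ᵥ x| = |∑ i, ∑ j, A i j * (x i * x j)| := by
        simp only [dotProduct, mulVec, Finset.mul_sum]
        congr 1; refine Finset.sum_congr rfl fun i _ => Finset.sum_congr rfl fun j _ => by ring
    _ ≤ ∑ i, ∑ j, |A i j| * |x i * x j| := by
        refine (Finset.abs_sum_le_sum_abs _ _).trans (Finset.sum_le_sum fun i _ => ?_)
        simpa only [abs_mul] using Finset.abs_sum_le_sum_abs (fun j => A i j * (x i * x j)) _
    _ ≤ ∑ i, ∑ j, |A i j| * (x ⬝ᵥ x) := by gcongr with i _ j _; exact hx i j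
    _ = (∑ i, ∑ j, |A i j|) * (x ⬝ᵥ x) := by simp only [Finset.sum_mul]

theorem riccati_sub_riccati_eq {R : Type*} [Ring R] (S k K A B P Q : R) :
    (S - k * P - P * K - P * A * P) - (S - k * Q - Q * K - Q * (A + B) * Q)
      = Q * B * Q - (k + Q * A) * (P - Q) - (P - Q) * (K + A * P) := by
  noncomm_ring

theorem posDef_of_hasDerivAt_of_mulVec_eq_zero {T : ℝ} {F F' : ℝ → Matrix n n ℝ}
    (hF : ∀ t ∈ Icc 0 T, (F t).IsHermitian) (hF0 : (F 0).PosDef)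
    (hderiv : ∀ t ∈ Icc 0 T, ∀ i j, HasDerivAt (fun s => F s i j) (F' t i j) t)
    (hker : ∀ t ∈ Icc 0 T, (F t).PosSemidef → ∀ x ≠ 0, F t *ᵥ x = 0 → 0 < x ⬝ᵥ F' t *ᵥ x) :
    ∀ t ∈ Icc 0 T, (F t).PosDef := by
  by_contra! hbad
  obtain ⟨t₀, ht₀, hF₀⟩ := hbad
  set S := Icc 0 T ×ˢ Metric.sphere (0 : n → ℝ) 1
  have hq : ContinuousOn (fun p : ℝ × (n → ℝ) => p.2 ⬝ᵥ F p.1 *ᵥ p.2) S := by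
    have hFc := continuousOn_of_differentiableAt_apply fun t ht i j =>
      (hderiv t ht i j).differentiableAt
    exact (continuous_snd.dotProduct (continuous_fst.matrix_mulVec continuous_snd)
      ).comp_continuousOn ((hFc.comp continuousOn_fst fun p hp => hp.1).prodMk continuousOn_snd)
  set K := S ∩ (fun p : ℝ × (n → ℝ) => p.2 ⬝ᵥ F p.1 *ᵥ p.2) ⁻¹' Iic 0
  have hK : IsCompact K := (isCompact_Icc.prod (isCompact_sphere 0 1)).of_isClosed_subset
    (hq.preimage_isClosed_of_isClosed (isClosed_Icc.prod Metric.isClosed_sphere) isClosed_Iic)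
    inter_subset_left
  have hKne : K.Nonempty := by
    obtain ⟨u, hu, hle⟩ : ∃ u ∈ Metric.sphere (0 : n → ℝ) 1, u ⬝ᵥ F t₀ *ᵥ u ≤ 0 := by
      by_contra! h
      exact hF₀ (posDef_of_forall_mem_sphere (hF t₀ ht₀) h)
    exact ⟨(t₀, u), ⟨ht₀, hu⟩, hle⟩
  -- `t₁` is the first time at which `F` fails to be positive definite, witnessed by `x`
  obtain ⟨⟨t₁, x⟩, ⟨⟨ht₁, hx⟩, hxF⟩, hmin⟩ := hK.exists_isMinOn hKne continuousOn_fst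
  have hx0 : x ≠ 0 := by rintro rfl; simp at hx
  have hbefore : ∀ s ∈ Ico 0 t₁, (F s).PosDef := fun s hs =>
    have hs' : s ∈ Icc 0 T := ⟨hs.1, hs.2.le.trans ht₁.2⟩
    posDef_of_forall_mem_sphere (hF s hs') fun u hu => lt_of_not_ge fun hle =>
      (hmin (a := (s, u)) ⟨⟨hs', hu⟩, hle⟩ :).not_gt hs.2
  have ht₁pos : 0 < t₁ := by
    refine ht₁.1.lt_of_ne fun h => ?_
    subst h
    exact (hF0.dotProduct_mulVec_pos hx0).not_ge (by simpa using hxF)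
  have hleft : ∀ y, ∀ᶠ s in 𝓝[<] t₁, 0 ≤ y ⬝ᵥ F s *ᵥ y := fun y =>
    mem_of_superset (Ioo_mem_nhdsLT ht₁pos) fun s hs => by
      simpa using (hbefore s ⟨hs.1.le, hs.2⟩).posSemidef.dotProduct_mulVec_nonneg y
  have hquad : ∀ y, HasDerivAt (fun s => y ⬝ᵥ F s *ᵥ y) (y ⬝ᵥ F' t₁ *ᵥ y) t₁ := fun y =>
    hasDerivAt_dotProduct_mulVec (hderiv t₁ ht₁) y y
  have hpsd : (F t₁).PosSemidef := .of_dotProduct_mulVec_nonneg (hF t₁ ht₁) fun y => by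
    simpa using ge_of_tendsto ((hquad y).continuousAt.tendsto.mono_left nhdsWithin_le_nhds)
      (hleft y)
  have hzero : x ⬝ᵥ F t₁ *ᵥ x = 0 :=
    le_antisymm hxF (by simpa using hpsd.dotProduct_mulVec_nonneg x)
  have hFx : F t₁ *ᵥ x = 0 := (hpsd.dotProduct_mulVec_zero_iff x).1 (by simpa using hzero)
  exact (hker t₁ ht₁ hpsd x hx0 hFx).not_ge
    ((hquad x).nonpos_of_eventually_nhdsLT_le ((hleft x).mono fun s hs => hzero ▸ hs))

theorem posSemidef_of_hasDerivAt_of_mulVec_eq_neg_smul [DecidableEq n] {T c : ℝ}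
    {D D' : ℝ → Matrix n n ℝ} (hD : ∀ t ∈ Icc 0 T, (D t).IsHermitian) (hD0 : (D 0).PosSemidef)
    (hderiv : ∀ t ∈ Icc 0 T, ∀ i j, HasDerivAt (fun s => D s i j) (D' t i j) t)
    (hc : ∀ t ∈ Icc 0 T, ∀ e : ℝ, 0 < e → ∀ x, D t *ᵥ x = -e • x →
      -(c * e * (x ⬝ᵥ x)) ≤ x ⬝ᵥ D' t *ᵥ x) :
    ∀ t ∈ Icc 0 T, (D t).PosSemidef := by
  -- the barrier `ε e^{(c+1)t}` outgrows the decay rate `c` that `hc` permits along eigenvectors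
  have hbarrier (ε : ℝ) (hε : 0 < ε) :
      ∀ t ∈ Icc 0 T, (D t + (ε * exp ((c + 1) * t)) • 1).PosDef := by
    refine posDef_of_hasDerivAt_of_mulVec_eq_zero
      (F' := fun t => D' t + (ε * ((c + 1) * exp ((c + 1) * t))) • 1)
      (fun t ht => (hD t ht).add (PosDef.one.smul (by positivity)).isHermitian)
      (by simpa using PosDef.posSemidef_add hD0 (PosDef.one.smul hε)) (fun t ht i j => ?_) ?_
    · have hexp := (((hasDerivAt_id t).const_mul (c + 1)).exp.const_mul ε).mul_const
        ((1 : Matrix n n ℝ) i j)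
      refine ((hderiv t ht i j).add hexp).congr_deriv ?_
      simp only [Matrix.add_apply, Matrix.smul_apply, smul_eq_mul, id]
      ring
    · intro t ht _ x hx hFx
      set e := ε * exp ((c + 1) * t)
      have hDx : D t *ᵥ x = -e • x := by
        rw [add_mulVec, smul_mulVec, one_mulVec] at hFx
        rw [neg_smul]
        exact eq_neg_of_add_eq_zero_left hFx
      have hxx : 0 < x ⬝ᵥ x := by simpa using PosDef.one.dotProduct_mulVec_pos hx
      have hD'x := hc t ht e (by positivity) x hDx
      rw [add_mulVec, smul_mulVec, one_mulVec, dotProduct_add, dotProduct_smul, smul_eq_mul]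
      nlinarith [hD'x, mul_pos (by positivity : 0 < e) hxx]
  intro t ht
  refine .of_forall_posDef_add_smul_one (hD t ht) fun δ hδ => ?_
  simpa [div_mul_cancel₀ _ (exp_pos _).ne'] using
    hbarrier (δ / exp ((c + 1) * t)) (by positivity) t ht

theorem posSemidef_of_hasDerivAt_eq_sub_mul_sub_mul [DecidableEq n] {T : ℝ}
    {D M L N : ℝ → Matrix n n ℝ} (hD : ∀ t ∈ Icc 0 T, (D t).IsHermitian)
    (hD0 : (D 0).PosSemidef) (hM : ContinuousOn M (Icc 0 T)) (hL : ContinuousOn L (Icc 0 T))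
    (hN : ∀ t ∈ Icc 0 T, (N t).PosSemidef)
    (hderiv : ∀ t ∈ Icc 0 T, ∀ i j,
      HasDerivAt (fun s => D s i j) ((N t - M t * D t - D t * L t) i j) t) :
    ∀ t ∈ Icc 0 T, (D t).PosSemidef := by
  obtain ⟨β, hβ⟩ : ∃ β, ∀ t ∈ Icc 0 T, ∑ i, ∑ j, |(M t + L t) i j| ≤ β :=
    (isCompact_Icc.bddAbove_image ((continuous_finsetSum _ fun i _ =>
      continuous_finsetSum _ fun j _ => (continuous_id.matrix_elem i j).abs).comp_continuousOn
        (hM.add hL))).imp fun β hβ t ht => hβ (mem_image_of_mem _ ht)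
  refine posSemidef_of_hasDerivAt_of_mulVec_eq_neg_smul (c := β) hD hD0 hderiv
    fun t ht e he x hDx => ?_
  have hDsymm : x ⬝ᵥ D t *ᵥ (L t *ᵥ x) = (D t *ᵥ x) ⬝ᵥ L t *ᵥ x := by
    rw [dotProduct_mulVec, ← mulVec_transpose, (isHermitian_iff_isSymm.1 (hD t ht)).eq]
  have hform : x ⬝ᵥ (N t - M t * D t - D t * L t) *ᵥ x
      = x ⬝ᵥ N t *ᵥ x + e * (x ⬝ᵥ (M t + L t) *ᵥ x) := by
    rw [sub_mulVec, sub_mulVec, ← mulVec_mulVec, ← mulVec_mulVec, dotProduct_sub, dotProduct_sub,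
      hDsymm, hDx, add_mulVec, dotProduct_add, mulVec_smul, dotProduct_smul, smul_dotProduct]
    simp only [smul_eq_mul]
    ring
  have hNx : 0 ≤ x ⬝ᵥ N t *ᵥ x := by simpa using (hN t ht).dotProduct_mulVec_nonneg x
  have hML : -(β * (x ⬝ᵥ x)) ≤ x ⬝ᵥ (M t + L t) *ᵥ x := by
    have hxx : 0 ≤ x ⬝ᵥ x := by simpa using dotProduct_star_self_nonneg x
    have habs := (abs_dotProduct_mulVec_le (M t + L t) x).trans
      (mul_le_mul_of_nonneg_right (hβ t ht) hxx)
    linarith [neg_abs_le (x ⬝ᵥ (M t + L t) *ᵥ x)]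
  rw [hform]
  nlinarith [mul_le_mul_of_nonneg_left hML he.le]

end

theorem Q_J_le_Q_R_general
    (d : ℕ)
    (T : ℝ)
    (Sμ SR SJ κ q₀ : Matrix (Fin d) (Fin d) ℝ)
    (hSJ : SJ.PosDef)
    (P Q : ℝ → Matrix (Fin d) (Fin d) ℝ)
    (hP0 : P 0 = q₀) (hQ0 : Q 0 = q₀)
    (hPpsd : ∀ t ∈ Icc (0 : ℝ) T, (P t).PosSemidef)
    (hQpsd : ∀ t ∈ Icc (0 : ℝ) T, (Q t).PosSemidef)
    (hPdiff : ∀ t ∈ Icc (0 : ℝ) T, ∀ i j : Fin d,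
      HasDerivAt (fun s => P s i j)
        ((Sμ - κ * P t - P t * κᵀ - P t * SR⁻¹ * P t) i j) t)
    (hQdiff : ∀ t ∈ Icc (0 : ℝ) T, ∀ i j : Fin d,
      HasDerivAt (fun s => Q s i j)
        ((Sμ - κ * Q t - Q t * κᵀ - Q t * (SR⁻¹ + SJ⁻¹) * Q t) i j) t) :
    ∀ t ∈ Icc (0 : ℝ) T, (P t - Q t).PosSemidef ∧ (Q t).trace ≤ (P t).trace := by
  have hP := continuousOn_of_differentiableAt_apply fun t ht i j =>
    (hPdiff t ht i j).differentiableAt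
  have hQ := continuousOn_of_differentiableAt_apply fun t ht i j =>
    (hQdiff t ht i j).differentiableAt
  have hD := posSemidef_of_hasDerivAt_eq_sub_mul_sub_mul (D := fun t => P t - Q t)
    (M := fun t => κ + Q t * SR⁻¹) (L := fun t => κᵀ + SR⁻¹ * P t)
    (N := fun t => Q t * SJ⁻¹ * Q t)
    (fun t ht => (hPpsd t ht).isHermitian.sub (hQpsd t ht).isHermitian)
    (by simp [hP0, hQ0, PosSemidef.zero])
    ((continuous_const.add (continuous_id.matrix_mul continuous_const)).comp_continuousOn hQ)
    ((continuous_const.add (continuous_const.matrix_mul continuous_id)).comp_continuousOn hP)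
    (fun t ht => by
      simpa only [(hQpsd t ht).isHermitian.eq] using
        hSJ.inv.posSemidef.conjTranspose_mul_mul_same (Q t))
    (fun t ht i j => by
      rw [← riccati_sub_riccati_eq Sμ]
      exact (hPdiff t ht i j).sub (hQdiff t ht i j))
  exact fun t ht => ⟨hD t ht, by simpa [trace_sub] using (hD t ht).trace_nonneg⟩

/-- the conditional covariance of the `J`-investor is dominated by that
of the `R`-investor. -/
theorem Q_J_le_Q_R
    (d : ℕ) (hd : 1 ≤ d)
    (T : ℝ) (hT : 0 < T)
    (Sμ SR SJ κ q₀ : Matrix (Fin d) (Fin d) ℝ)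
    (hSμ : Sμ.PosDef) (hSR : SR.PosDef) (hSJ : SJ.PosDef)
    (hκ : ∀ x : Fin d → ℝ, x ≠ 0 → 0 < x ⬝ᵥ (κ *ᵥ x))
    (hq₀ : q₀.PosSemidef)
    (P Q : ℝ → Matrix (Fin d) (Fin d) ℝ)
    (hP0 : P 0 = q₀) (hQ0 : Q 0 = q₀)
    (hPpsd : ∀ t ∈ Icc (0 : ℝ) T, (P t).PosSemidef)
    (hQpsd : ∀ t ∈ Icc (0 : ℝ) T, (Q t).PosSemidef)
    (hPdiff : ∀ t ∈ Icc (0 : ℝ) T, ∀ i j : Fin d,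
      HasDerivAt (fun s => P s i j)
        ((Sμ - κ * P t - P t * κᵀ - P t * SR⁻¹ * P t) i j) t)
    (hQdiff : ∀ t ∈ Icc (0 : ℝ) T, ∀ i j : Fin d,
      HasDerivAt (fun s => Q s i j)
        ((Sμ - κ * Q t - Q t * κᵀ - Q t * (SR⁻¹ + SJ⁻¹) * Q t) i j) t) :
    ∀ t ∈ Icc (0 : ℝ) T, (P t - Q t).PosSemidef ∧ (Q t).trace ≤ (P t).trace :=
  Q_J_le_Q_R_general d T Sμ SR SJ κ q₀ hSJ P Q hP0 hQ0 hPpsd hQpsd hPdiff hQdiff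
end

section
/- Let d ≥ 1, let z ∈ ℝ^{d×d} be symmetric positive semidefinite, let Γ ∈ ℝ^{d×d} be symmetric positive definite, and let ε ≥ 0. Then tr( z·(Γ + ε·z)^{-1}·z ) ≥ tr(z)² / ( d·tr(Γ) + ε·d·tr(z) ). -/
/-!
Put `M = Γ + ε • z`, which is positive definite. Cauchy–Schwarz for the inner product
`⟪x, y⟫ = tr (y * M⁻¹ * xᴴ)` on matrices, applied to `M` and `z`, gives
`tr(z)² ≤ tr(M) · tr(z M⁻¹ z)`. It remains to note `tr M ≤ d · tr M = d · tr Γ + ε · d · tr z`,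
as `tr M ≥ 0` and `d ≥ 1`.
-/

open Matrix

theorem Matrix.trace_sq_le_trace_mul_trace_mul_inv_mul {n : Type*} [Fintype n] [DecidableEq n]
    {z M : Matrix n n ℝ} (hz : z.IsHermitian) (hM : M.PosDef) :
    z.trace ^ 2 ≤ M.trace * (z * M⁻¹ * z).trace := by
  let := M⁻¹.toMatrixSeminormedAddCommGroup hM.inv.posSemidef
  let := M⁻¹.toMatrixInnerProductSpace hM.inv.posSemidef
  have h := real_inner_mul_inner_self_le M z
  change (z * M⁻¹ * Mᴴ).trace * (z * M⁻¹ * Mᴴ).trace ≤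
    (M * M⁻¹ * Mᴴ).trace * (z * M⁻¹ * zᴴ).trace at h
  have hdet : IsUnit M.det := (isUnit_iff_isUnit_det M).1 hM.isUnit
  rwa [hM.isHermitian.eq, hz.eq, nonsing_inv_mul_cancel_right _ _ hdet,
    nonsing_inv_mul_cancel_right _ _ hdet, ← sq] at h

/-- `tr(z(Γ+εz)⁻¹z) ≥ tr(z)²/(d·tr(Γ) + ε·d·tr(z))`. -/
theorem trace_z_inv_z_lower_bound
    (d : ℕ) (hd : 1 ≤ d)
    (z Γm : Matrix (Fin d) (Fin d) ℝ)
    (hz : z.PosSemidef) (hΓ : Γm.PosDef)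
    (ε : ℝ) (hε : 0 ≤ ε) :
    z.trace ^ 2 / ((d : ℝ) * Γm.trace + ε * (d : ℝ) * z.trace) ≤
      (z * (Γm + ε • z)⁻¹ * z).trace := by
  set M := Γm + ε • z
  have hM : M.PosDef := hΓ.add_posSemidef (hz.smul hε)
  have hq : 0 ≤ (z * M⁻¹ * z).trace := by
    simpa only [hz.isHermitian.eq] using
      (hM.inv.posSemidef.conjTranspose_mul_mul_same z).trace_nonneg
  have hden : (d : ℝ) * Γm.trace + ε * (d : ℝ) * z.trace = d * M.trace := by
    simp only [M, trace_add, trace_smul, smul_eq_mul]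
    ring
  have hMd : M.trace ≤ d * M.trace :=
    le_mul_of_one_le_left hM.posSemidef.trace_nonneg (by exact_mod_cast hd)
  rw [hden]
  refine div_le_of_le_mul₀ (hM.posSemidef.trace_nonneg.trans hMd) hq ?_
  calc z.trace ^ 2 ≤ M.trace * (z * M⁻¹ * z).trace :=
        trace_sq_le_trace_mul_trace_mul_inv_mul hz.isHermitian hM
    _ ≤ d * M.trace * (z * M⁻¹ * z).trace := by gcongr
    _ = (z * M⁻¹ * z).trace * (d * M.trace) := mul_comm _ _
end

section
/- Let d ≥ 1, let q ∈ ℝ^{d×d} be symmetric positive semidefinite and let Σ ∈ ℝ^{d×d} be symmetric positive definite. Then tr( q·Σ^{-1}·q ) ≥ tr(q)² / ( d·tr(Σ) ) ≥ 0. -/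
/-!
Writing `R = √Σ`, Cauchy–Schwarz for the Frobenius inner product `⟨X, Y⟩ = tr (Xᵀ Y)` applied to
`X = R⁻¹ q` and `Y = R` gives `tr(q)² ≤ tr(q Σ⁻¹ q) · tr(Σ)`; dividing by `tr Σ > 0` and using
`d ≥ 1` yields the bound.
-/

open scoped MatrixOrder

namespace Matrix

variable {m n : Type*} [Fintype m] [Fintype n]

theorem trace_transpose_mul_sq_le (X Y : Matrix m n ℝ) :
    (Xᵀ * Y).trace ^ 2 ≤ (Xᵀ * X).trace * (Yᵀ * Y).trace := by
  simp only [trace, diag, mul_apply, transpose_apply, ← sq]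
  rw [← Finset.sum_product', ← Finset.sum_product', ← Finset.sum_product']
  exact Finset.sum_mul_sq_le_sq_mul_sq _ _ _

theorem PosDef.trace_sq_le_trace_mul_inv_mul_mul_trace [DecidableEq n] {q S : Matrix n n ℝ}
    (hq : q.IsHermitian) (hS : S.PosDef) :
    q.trace ^ 2 ≤ (q * S⁻¹ * q).trace * S.trace := by
  set R := CFC.sqrt S
  have hRR : R * R = S := CFC.sqrt_mul_sqrt_self S hS.posSemidef.nonneg
  have hRT : Rᵀ = R := (nonneg_iff_posSemidef.mp (CFC.sqrt_nonneg S)).isHermitian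
  have hR : IsUnit R.det :=
    isUnit_of_mul_isUnit_left (y := R.det) (by rw [← det_mul, hRR]; exact hS.det_pos.ne'.isUnit)
  have hqT : qᵀ = q := hq
  have := trace_transpose_mul_sq_le (R⁻¹ * q) R
  rwa [transpose_mul, hqT, transpose_nonsing_inv, hRT, mul_assoc, nonsing_inv_mul _ hR, mul_one,
    mul_assoc, ← mul_assoc R⁻¹, ← mul_inv_rev, hRR, ← mul_assoc] at this

end Matrix

/-- `tr(qΣ⁻¹q) ≥ tr(q)²/(d·tr(Σ)) ≥ 0`. -/
theorem trace_q_Sigma_inv_q_lower_bound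
    (d : ℕ) (hd : 1 ≤ d)
    (q S : Matrix (Fin d) (Fin d) ℝ)
    (hq : q.PosSemidef) (hS : S.PosDef) :
    q.trace ^ 2 / ((d : ℝ) * S.trace) ≤ (q * S⁻¹ * q).trace ∧
      0 ≤ q.trace ^ 2 / ((d : ℝ) * S.trace) := by
  have : Nonempty (Fin d) := Fin.pos_iff_nonempty.mp hd
  have htr : 0 < S.trace := hS.trace_pos
  have hdS : S.trace ≤ d * S.trace := le_mul_of_one_le_left htr.le (by exact_mod_cast hd)
  refine ⟨?_, div_nonneg (sq_nonneg _) (by positivity)⟩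
  calc q.trace ^ 2 / (d * S.trace) ≤ q.trace ^ 2 / S.trace :=
        div_le_div_of_nonneg_left (sq_nonneg _) htr hdS
    _ ≤ (q * S⁻¹ * q).trace :=
        (div_le_iff₀ htr).mpr (hS.trace_sq_le_trace_mul_inv_mul_mul_trace hq.isHermitian)
end

section
/- Let d ≥ 1 be an integer, let ψ > 0, ā > 0 and let b satisfy 0 < b < 2·√(ā/ψ). Set ε₀ = ( 2·√(ψ·ā) − b·ψ ) / ( d·ā ). Then ε₀ > 0 and for every ε with 0 < ε ≤ ε₀ and every x ≥ 0, x² / ( ψ + ε·d·x ) − b·x + ā ≥ 0. -/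
open Real

set_option maxHeartbeats 1000000 in
/-- scalar core inequality in the proof of the trace estimate for
discrete-time expert opinions. -/
theorem scalar_core_inequality
    (d : ℕ) (hd : 1 ≤ d)
    (ψ abar b : ℝ) (hψ : 0 < ψ) (habar : 0 < abar)
    (hb0 : 0 < b) (hb : b < 2 * Real.sqrt (abar / ψ)) :
    0 < (2 * Real.sqrt (ψ * abar) - b * ψ) / ((d : ℝ) * abar) ∧
      ∀ ε : ℝ, 0 < ε → ε ≤ (2 * Real.sqrt (ψ * abar) - b * ψ) / ((d : ℝ) * abar) →
        ∀ x : ℝ, 0 ≤ x →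
          0 ≤ x ^ 2 / (ψ + ε * (d : ℝ) * x) - b * x + abar := by
  set s := Real.sqrt (ψ * abar) with hs_def
  have hs2 : s ^ 2 = ψ * abar := Real.sq_sqrt (by positivity)
  have hs0 : 0 < s := Real.sqrt_pos.mpr (by positivity)
  have hbψ : b * ψ < 2 * s := by
    have hu : Real.sqrt ψ ^ 2 = ψ := Real.sq_sqrt hψ.le
    have hv : Real.sqrt abar ^ 2 = abar := Real.sq_sqrt habar.le
    have hu0 : 0 < Real.sqrt ψ := Real.sqrt_pos.mpr hψ
    have hv0 : 0 < Real.sqrt abar := Real.sqrt_pos.mpr habar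
    have hsm : s = Real.sqrt ψ * Real.sqrt abar := by
      rw [hs_def, Real.sqrt_mul hψ.le]
    have hdiv : Real.sqrt (abar / ψ) = Real.sqrt abar / Real.sqrt ψ :=
      Real.sqrt_div' abar hψ.le ▸ Real.sqrt_div habar.le ψ
    rw [hdiv] at hb
    have : b * Real.sqrt ψ < 2 * Real.sqrt abar := by
      have := (lt_div_iff₀ hu0).mp (by rw [mul_div_assoc]; exact hb : b < 2 * Real.sqrt abar / Real.sqrt ψ)
      linarith [this]
    nlinarith [this]
  clear_value s
  have hd0 : (0:ℝ) < (d : ℝ) := by exact_mod_cast Nat.lt_of_lt_of_le Nat.zero_lt_one hd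
  have hnum : 0 < 2 * s - b * ψ := by linarith
  refine ⟨div_pos hnum (by positivity), ?_⟩
  intro ε hε hε' x hx
  set c := ε * (d : ℝ) with hc_def
  have hc : 0 < c := by positivity
  clear_value c
  have hkey : c * abar + b * ψ ≤ 2 * s := by
    have h := (le_div_iff₀ (by positivity : (0:ℝ) < (d:ℝ) * abar)).mp hε'
    nlinarith [h]
  have h2 : (c * abar + b * ψ) ^ 2 ≤ 4 * (ψ * abar) := by
    have h0 : 0 ≤ c * abar + b * ψ := by positivity
    nlinarith [sq_nonneg (c * abar + b * ψ - 2 * s)]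
  have hA : 0 ≤ 1 - c * b := by
    nlinarith [sq_nonneg (c * abar - b * ψ), mul_pos hψ habar]
  have hD : 0 < ψ + c * x := by positivity
  have hdisc : (c * abar - b * ψ) ^ 2 ≤ 4 * (1 - c * b) * (ψ * abar) := by
    nlinarith [h2]
  have hgoal : (b * x - abar) * (ψ + c * x) ≤ x ^ 2 := by
    rcases eq_or_lt_of_le hA with h | h
    · have hB : c * abar - b * ψ = 0 := by
        nlinarith [sq_nonneg (c * abar - b * ψ), mul_pos hψ habar]
      nlinarith [sq_nonneg x, mul_pos hψ habar]
    · nlinarith [sq_nonneg (2 * (1 - c * b) * x + (c * abar - b * ψ)), hdisc, h,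
        mul_pos hψ habar]
  have := (le_div_iff₀ hD).mpr hgoal
  linarith
end
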